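/- arXiv:1909.07752 — 3 statements merged into one kernel-verified Lean document; each statement's English description precedes it below -/
import Mathlib

section
/- Let 𝒳 = {x_{n,k}} with weights τ = {τ_{n,k}} be a Marcinkiewicz–Zygmund family on 𝕋 with constants A, B > 0, let f be a continuous function on 𝕋, and let p_n ∈ 𝒯_n be a minimizer of p ↦ ∑_{k=1}^{L_n} |f(x_{n,k}) − p(x_{n,k})|² τ_{n,k} over 𝒯_n. Then ‖P_n f − p_n‖₂² ≤ A^{-2} B ∑_{k=1}^{L_n} |f(x_{n,k}) − P_n f(x_{n,k})|² τ_{n,k}. -/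
/-!
The weighted least-squares error `q ↦ ∑ₖ |f(xₖ) - q(xₖ)|² τₖ` is the squared norm of the weighted
samples `(√τₖ q(xₖ))ₖ ∈ ℂ^L`, so `pₙ` is a best approximation of the samples of `f` from a subspace.
Hence the residual of `f` at `pₙ` is orthogonal to the sampled `𝒯ₙ`, and Pythagoras bounds the
discrete norm of `Pₙf - pₙ ∈ 𝒯ₙ` by the discrete error of `Pₙf`. The lower MZ inequality turns this
into `‖Pₙf - pₙ‖₂² ≤ A⁻¹ ∑ₖ |f(xₖ) - Pₙf(xₖ)|² τₖ`, and `A ≤ B` (the MZ inequality for `p = 1`).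
-/

open MeasureTheory AddCircle

noncomputable section

/-- The torus `𝕋 = ℝ/ℤ`. -/
abbrev Torus := UnitAddCircle

/-- Normalized Haar (Lebesgue) probability measure on the torus. -/
abbrev haar : Measure Torus := AddCircle.haarAddCircle

/-- `‖p‖₂² = ∫_𝕋 |p(x)|² dx`. -/
def L2normSq (p : Torus → ℂ) : ℝ := ∫ x, ‖p x‖ ^ 2 ∂haar

/-- `p` is a trigonometric polynomial of degree `n`. -/
def IsTrigPoly (n : ℕ) (p : Torus → ℂ) : Prop :=
  ∃ c : ℤ → ℂ, p = fun x => ∑ l ∈ Finset.Icc (-(n : ℤ)) (n : ℤ), c l * fourier l x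

/-- `P_n f`, the orthogonal projection of `f` onto `𝒯_n` (partial Fourier sum). -/
def proj (n : ℕ) (f : Torus → ℂ) : Torus → ℂ :=
  fun x => ∑ l ∈ Finset.Icc (-(n : ℤ)) (n : ℤ), fourierCoeff f l * fourier l x

open InnerProductSpace

theorem Submodule.norm_sub_sq_le_of_forall_norm_sub_le {𝕜 E : Type*} [RCLike 𝕜]
    [NormedAddCommGroup E] [InnerProductSpace 𝕜 E] {K : Submodule 𝕜 E} {u v w : E}
    (hv : v ∈ K) (hw : w ∈ K) (hmin : ∀ w ∈ K, ‖u - v‖ ≤ ‖u - w‖) :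
    ‖w - v‖ ^ 2 ≤ ‖u - w‖ ^ 2 := by
  have hinf : ‖u - v‖ = ⨅ w : K, ‖u - w‖ :=
    le_antisymm (le_ciInf fun w => hmin w w.2)
      (ciInf_le ⟨0, Set.forall_mem_range.2 fun _ => norm_nonneg _⟩ (⟨v, hv⟩ : K))
  have horth : ⟪u - v, v - w⟫_𝕜 = 0 :=
    (K.norm_eq_iInf_iff_inner_eq_zero hv).1 hinf _ (K.sub_mem hv hw)
  have hpyth := norm_add_sq_eq_norm_sq_add_norm_sq_of_inner_eq_zero _ _ horth
  rw [sub_add_sub_cancel, ← norm_neg (v - w), neg_sub] at hpyth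
  nlinarith [norm_nonneg (u - v)]

section WeightedSample

variable {X ι : Type*} [Fintype ι]

def weightedSample (x : ι → X) (τ : ι → ℝ) : (X → ℂ) →ₗ[ℂ] EuclideanSpace ℂ ι :=
  (WithLp.linearEquiv 2 ℂ (ι → ℂ)).symm.toLinearMap ∘ₗ
    LinearMap.pi fun k => (Real.sqrt (τ k) : ℂ) • LinearMap.proj (x k)

theorem norm_weightedSample_sq (x : ι → X) {τ : ι → ℝ} (hτ : ∀ k, 0 ≤ τ k) (p : X → ℂ) :
    ‖weightedSample x τ p‖ ^ 2 = ∑ k, ‖p (x k)‖ ^ 2 * τ k := by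
  rw [EuclideanSpace.norm_sq_eq]
  refine Finset.sum_congr rfl fun k _ => ?_
  simp [weightedSample, mul_pow, Real.sq_sqrt (hτ k), mul_comm]

theorem weighted_sq_sum_sub_le_of_minimizes (x : ι → X) {τ : ι → ℝ} (hτ : ∀ k, 0 ≤ τ k)
    {K : Submodule ℂ (X → ℂ)} {f p q : X → ℂ} (hp : p ∈ K) (hq : q ∈ K)
    (hmin : ∀ r ∈ K, ∑ k, ‖f (x k) - p (x k)‖ ^ 2 * τ k ≤ ∑ k, ‖f (x k) - r (x k)‖ ^ 2 * τ k) :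
    ∑ k, ‖q (x k) - p (x k)‖ ^ 2 * τ k ≤ ∑ k, ‖f (x k) - q (x k)‖ ^ 2 * τ k := by
  have hS (r s : X → ℂ) : ‖weightedSample x τ r - weightedSample x τ s‖ ^ 2 =
      ∑ k, ‖r (x k) - s (x k)‖ ^ 2 * τ k := by
    rw [← map_sub, norm_weightedSample_sq x hτ]; rfl
  rw [← hS, ← hS]
  refine Submodule.norm_sub_sq_le_of_forall_norm_sub_le (K := K.map (weightedSample x τ))
    (K.mem_map_of_mem hp) (K.mem_map_of_mem hq) ?_
  rintro _ ⟨r, hr, rfl⟩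
  rw [← sq_le_sq₀ (norm_nonneg _) (norm_nonneg _), hS, hS]
  exact hmin r hr

end WeightedSample

def trigPolySubmodule (n : ℕ) : Submodule ℂ (Torus → ℂ) where
  carrier := {p | IsTrigPoly n p}
  add_mem' := by
    rintro _ _ ⟨c, rfl⟩ ⟨d, rfl⟩
    exact ⟨c + d, by ext; simp [add_mul, Finset.sum_add_distrib]⟩
  zero_mem' := ⟨0, by ext; simp⟩
  smul_mem' := by
    rintro z _ ⟨c, rfl⟩
    exact ⟨z • c, by ext; simp [Finset.mul_sum, mul_assoc]⟩

theorem isTrigPoly_one (n : ℕ) : IsTrigPoly n 1 := by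
  refine ⟨Pi.single 0 1, funext fun t => ?_⟩
  rw [Finset.sum_eq_single_of_mem 0 (by simp)]
  · simp
  · intro l _ hl
    simp [hl]

theorem L2normSq_one : L2normSq 1 = 1 := by
  simp [L2normSq]

theorem mz_lower_le_upper {L : ℕ → ℕ} {x : ∀ n, Fin (L n) → Torus} {τ : ∀ n, Fin (L n) → ℝ}
    {A B : ℝ} (hMZ : ∀ n (p : Torus → ℂ), IsTrigPoly n p →
      A * L2normSq p ≤ ∑ k, ‖p (x n k)‖ ^ 2 * τ n k ∧
      ∑ k, ‖p (x n k)‖ ^ 2 * τ n k ≤ B * L2normSq p) :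
    A ≤ B := by
  obtain ⟨hlow, hup⟩ := hMZ 0 1 (isTrigPoly_one 0)
  rw [L2normSq_one, mul_one] at hlow hup
  exact hlow.trans hup

theorem quasi_interpolant_vs_projection_general
    (L : ℕ → ℕ) (x : ∀ n, Fin (L n) → Torus) (τ : ∀ n, Fin (L n) → ℝ)
    (A B : ℝ) (hA : 0 < A) (hτ : ∀ n k, 0 < τ n k)
    (hMZ : ∀ n (p : Torus → ℂ), IsTrigPoly n p →
      A * L2normSq p ≤ ∑ k, ‖p (x n k)‖ ^ 2 * τ n k ∧
      ∑ k, ‖p (x n k)‖ ^ 2 * τ n k ≤ B * L2normSq p)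
    (f : Torus → ℂ)
    (n : ℕ) (pn : Torus → ℂ) (hpn : IsTrigPoly n pn)
    (hmin : ∀ q : Torus → ℂ, IsTrigPoly n q →
      ∑ k, ‖f (x n k) - pn (x n k)‖ ^ 2 * τ n k ≤
        ∑ k, ‖f (x n k) - q (x n k)‖ ^ 2 * τ n k) :
    L2normSq (fun t => proj n f t - pn t) ≤
      A⁻¹ ^ 2 * B * ∑ k, ‖f (x n k) - proj n f (x n k)‖ ^ 2 * τ n k := by
  set E := ∑ k, ‖f (x n k) - proj n f (x n k)‖ ^ 2 * τ n k
  have hτ' : ∀ k, 0 ≤ τ n k := fun k => (hτ n k).le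
  have hproj : proj n f ∈ trigPolySubmodule n := ⟨_, rfl⟩
  have hdiff : proj n f - pn ∈ trigPolySubmodule n := sub_mem hproj hpn
  have hdisc : ∑ k, ‖proj n f (x n k) - pn (x n k)‖ ^ 2 * τ n k ≤ E :=
    weighted_sq_sum_sub_le_of_minimizes (x n) hτ' hpn hproj hmin
  have hlow : A * L2normSq (proj n f - pn) ≤ E := (hMZ n _ hdiff).1.trans hdisc
  have hE : 0 ≤ E := Finset.sum_nonneg fun k _ => mul_nonneg (sq_nonneg _) (hτ' k)
  calc L2normSq (proj n f - pn) ≤ A⁻¹ * E := by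
        rw [inv_mul_eq_div, le_div_iff₀ hA]; linarith
    _ = A⁻¹ ^ 2 * A * E := by field_simp
    _ ≤ A⁻¹ ^ 2 * B * E := by gcongr; exact mz_lower_le_upper hMZ

/-- if `p_n ∈ 𝒯_n` minimizes the weighted least squares functional
`p ↦ ∑_k |f(x_{n,k}) − p(x_{n,k})|² τ_{n,k}` over `𝒯_n`, then
`‖P_n f − p_n‖₂² ≤ A⁻² B ∑_k |f(x_{n,k}) − P_n f(x_{n,k})|² τ_{n,k}`. -/
theorem quasi_interpolant_vs_projection
    (L : ℕ → ℕ) (x : ∀ n, Fin (L n) → Torus) (τ : ∀ n, Fin (L n) → ℝ)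
    (A B : ℝ) (hA : 0 < A) (hB : 0 < B) (hτ : ∀ n k, 0 < τ n k)
    (hMZ : ∀ n (p : Torus → ℂ), IsTrigPoly n p →
      A * L2normSq p ≤ ∑ k, ‖p (x n k)‖ ^ 2 * τ n k ∧
      ∑ k, ‖p (x n k)‖ ^ 2 * τ n k ≤ B * L2normSq p)
    (f : Torus → ℂ) (hf : Continuous f)
    (n : ℕ) (pn : Torus → ℂ) (hpn : IsTrigPoly n pn)
    (hmin : ∀ q : Torus → ℂ, IsTrigPoly n q →
      ∑ k, ‖f (x n k) - pn (x n k)‖ ^ 2 * τ n k ≤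
        ∑ k, ‖f (x n k) - q (x n k)‖ ^ 2 * τ n k) :
    L2normSq (fun t => proj n f t - pn t) ≤
      A⁻¹ ^ 2 * B * ∑ k, ‖f (x n k) - proj n f (x n k)‖ ^ 2 * τ n k :=
  quasi_interpolant_vs_projection_general L x τ A B hA hτ hMZ f n pn hpn hmin

end
end

section
/- Let 𝒳 = {x_{n,k}} with weights τ = {τ_{n,k}} be a Marcinkiewicz–Zygmund family on 𝕋 with constants A, B > 0. Let f be a continuous function on 𝕋 whose Fourier coefficients satisfy |f̂(k)| ≤ c e^{-ρ|k|} for all k ∈ ℤ, for some c > 0 and ρ > 0, and for each n let p_n ∈ 𝒯_n be a minimizer of p ↦ ∑_{k=1}^{L_n} |f(x_{n,k}) − p(x_{n,k})|² τ_{n,k}. Then there is a constant C > 0 such that ‖f − p_n‖₂ ≤ C e^{-ρn} for all n ≥ 1. -/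
open MeasureTheory AddCircle

noncomputable section

/-! Let `Sₙ` be the `n`-th Fourier partial sum of `f`. Exponential decay of the coefficients
gives `‖f - Sₙ‖_∞ ≲ e^{-ρn}`. Since `pₙ` minimizes the discrete error, its discrete error is at
most that of `Sₙ`, hence at most `B ‖f - Sₙ‖_∞²` (the upper MZ inequality for constants bounds the
total weight by `B`). So the discrete norm of `Sₙ - pₙ ∈ 𝒯ₙ` is `≲ e^{-ρn}`, the lower MZ inequality
turns this into an `L²` bound, and the triangle inequality through `Sₙ` concludes. -/

open Finset

lemma summable_pow_natAbs {r : ℝ} (hr0 : 0 ≤ r) (hr1 : r < 1) :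
    Summable fun k : ℤ => r ^ k.natAbs := by
  apply Summable.of_nat_of_neg <;> simpa using summable_geometric_of_lt_one hr0 hr1

/- For `|k| > n`, the shift `k ↦ k ∓ n` is injective and `|k| = n + |k ∓ n|`. -/
lemma tsum_compl_Icc_pow_natAbs_le {r : ℝ} (hr0 : 0 ≤ r) (hr1 : r < 1) (n : ℕ) :
    ∑' k : ↑(↑(Icc (-(n : ℤ)) n) : Set ℤ)ᶜ, r ^ (k : ℤ).natAbs ≤
      r ^ n * ∑' m : ℤ, r ^ m.natAbs := by
  have hout (k : ↥(↑(Icc (-(n : ℤ)) n) : Set ℤ)ᶜ) : (k : ℤ) < -n ∨ n < (k : ℤ) := by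
    have hk := k.2
    simp only [coe_Icc, Set.mem_compl_iff, Set.mem_Icc, not_and, not_le] at hk
    omega
  rw [← tsum_mul_left]
  refine Summable.tsum_le_tsum_of_inj (fun k => if 0 ≤ (k : ℤ) then (k : ℤ) - n else k + n)
    (fun a b hab => ?_) (fun _ _ => by positivity) (fun k => ?_)
    ((summable_pow_natAbs hr0 hr1).subtype _) ((summable_pow_natAbs hr0 hr1).mul_left _)
  · have := hout a; have := hout b
    apply Subtype.ext
    dsimp only at hab
    split_ifs at hab <;> omega
  · have := hout k
    rw [← pow_add]
    exact le_of_eq (congrArg _ (by split_ifs <;> omega))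

theorem norm_sub_sum_Icc_le_of_hasSum {E : Type*} [NormedAddCommGroup E] {g : ℤ → E} {a : E}
    (hg : HasSum g a) {c r : ℝ} (hr0 : 0 ≤ r) (hr1 : r < 1)
    (hgr : ∀ k, ‖g k‖ ≤ c * r ^ k.natAbs) (n : ℕ) :
    ‖a - ∑ k ∈ Icc (-(n : ℤ)) n, g k‖ ≤ c * (∑' m : ℤ, r ^ m.natAbs) * r ^ n := by
  set s : Finset ℤ := Icc (-(n : ℤ)) n
  have hgeo := summable_pow_natAbs hr0 hr1
  have hc : 0 ≤ c := by simpa using (norm_nonneg _).trans (hgr 0)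
  have hnorm : Summable fun k => ‖g k‖ :=
    (hgeo.mul_left c).of_nonneg_of_le (fun _ => norm_nonneg _) hgr
  have htail : a - ∑ k ∈ s, g k = ∑' k : ↑(↑s : Set ℤ)ᶜ, g k := by
    rw [← hg.tsum_eq, ← hg.summable.sum_add_tsum_compl (s := s), add_sub_cancel_left]
  calc ‖a - ∑ k ∈ s, g k‖
      ≤ ∑' k : ↑(↑s : Set ℤ)ᶜ, ‖g k‖ := htail ▸ norm_tsum_le_tsum_norm (hnorm.subtype _)
    _ ≤ ∑' k : ↑(↑s : Set ℤ)ᶜ, c * r ^ (k : ℤ).natAbs :=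
        (hnorm.subtype _).tsum_le_tsum (fun k => hgr k) ((hgeo.mul_left c).subtype _)
    _ ≤ c * (r ^ n * ∑' m : ℤ, r ^ m.natAbs) := by
        rw [tsum_mul_left]
        exact mul_le_mul_of_nonneg_left (tsum_compl_Icc_pow_natAbs_le hr0 hr1 n) hc
    _ = c * (∑' m : ℤ, r ^ m.natAbs) * r ^ n := by ring

def fourierPartialSum {T : ℝ} [Fact (0 < T)] (n : ℕ) (f : AddCircle T → ℂ) (t : AddCircle T) :
    ℂ :=
  ∑ l ∈ Icc (-(n : ℤ)) n, fourierCoeff f l * fourier l t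

theorem norm_sub_fourierPartialSum_le {T : ℝ} [Fact (0 < T)] {f : AddCircle T → ℂ}
    (hf : Continuous f) {c r : ℝ} (hr0 : 0 ≤ r) (hr1 : r < 1)
    (hdecay : ∀ k : ℤ, ‖fourierCoeff f k‖ ≤ c * r ^ k.natAbs) (n : ℕ) (t : AddCircle T) :
    ‖f t - fourierPartialSum n f t‖ ≤ c * (∑' m : ℤ, r ^ m.natAbs) * r ^ n := by
  have hsum : Summable (fourierCoeff f) :=
    ((summable_pow_natAbs hr0 hr1).mul_left c).of_norm_bounded hdecay
  have hnorm (k : ℤ) : ‖fourierCoeff f k • fourier k t‖ = ‖fourierCoeff f k‖ := by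
    rw [norm_smul, fourier_apply, Circle.norm_coe, mul_one]
  exact norm_sub_sum_Icc_le_of_hasSum
    (has_pointwise_sum_fourier_series_of_summable (f := ⟨f, hf⟩) hsum t) hr0 hr1
    (fun k => (hnorm k).trans_le (hdecay k)) n

lemma exp_neg_mul_abs_intCast (ρ : ℝ) (k : ℤ) :
    Real.exp (-ρ * |(k : ℝ)|) = Real.exp (-ρ) ^ k.natAbs := by
  rw [← Real.exp_nat_mul, Nat.cast_natAbs, Int.cast_abs, mul_comm]

lemma IsTrigPoly.continuous {n : ℕ} {p : Torus → ℂ} (h : IsTrigPoly n p) : Continuous p := by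
  obtain ⟨a, rfl⟩ := h
  fun_prop

lemma IsTrigPoly.sub {n : ℕ} {p q : Torus → ℂ} (hp : IsTrigPoly n p) (hq : IsTrigPoly n q) :
    IsTrigPoly n (fun t => p t - q t) := by
  obtain ⟨a, rfl⟩ := hp
  obtain ⟨b, rfl⟩ := hq
  exact ⟨a - b, funext fun t => by simp only [← sum_sub_distrib, Pi.sub_apply, sub_mul]⟩

lemma isTrigPoly_const (n : ℕ) (a : ℂ) : IsTrigPoly n (fun _ => a) := by
  refine ⟨Pi.single 0 a, funext fun t => ?_⟩
  rw [sum_eq_single_of_mem 0 (by simp) fun l _ hl => by simp [hl]]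
  simp

lemma isTrigPoly_fourierPartialSum (n : ℕ) (f : Torus → ℂ) :
    IsTrigPoly n (fourierPartialSum n f) :=
  ⟨fourierCoeff f, rfl⟩

lemma norm_sub_sq_le {E : Type*} [SeminormedAddCommGroup E] (u v w : E) :
    ‖u - v‖ ^ 2 ≤ 2 * ‖u - w‖ ^ 2 + 2 * ‖w - v‖ ^ 2 :=
  calc ‖u - v‖ ^ 2 ≤ (‖u - w‖ + ‖w - v‖) ^ 2 := by gcongr; exact norm_sub_le_norm_sub_add_norm_sub ..
    _ ≤ 2 * ‖u - w‖ ^ 2 + 2 * ‖w - v‖ ^ 2 := by linarith [add_sq_le (a := ‖u - w‖) (b := ‖w - v‖)]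

section WeightedSum

variable {X ι E : Type*} [Fintype ι] [SeminormedAddCommGroup E] (x : ι → X) {τ : ι → ℝ}

lemma sum_norm_sub_sq_mul_le (hτ : ∀ k, 0 ≤ τ k) (f g h : X → E) :
    ∑ k, ‖f (x k) - g (x k)‖ ^ 2 * τ k ≤
      2 * ∑ k, ‖f (x k) - h (x k)‖ ^ 2 * τ k + 2 * ∑ k, ‖h (x k) - g (x k)‖ ^ 2 * τ k := by
  rw [mul_sum, mul_sum, ← sum_add_distrib]
  gcongr with k
  linarith [mul_le_mul_of_nonneg_right (norm_sub_sq_le (f (x k)) (g (x k)) (h (x k))) (hτ k)]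

lemma sum_norm_sq_mul_le (hτ : ∀ k, 0 ≤ τ k) {g : X → E} {ε : ℝ} (hg : ∀ t, ‖g t‖ ≤ ε) :
    ∑ k, ‖g (x k)‖ ^ 2 * τ k ≤ ε ^ 2 * ∑ k, τ k := by
  rw [mul_sum]
  gcongr with k
  · exact hτ k
  · exact hg _

end WeightedSum

lemma L2normSq_le_of_norm_le {g : Torus → ℂ} {ε : ℝ} (hg : ∀ t, ‖g t‖ ≤ ε) :
    L2normSq g ≤ ε ^ 2 := by
  have hle : (fun t => ‖g t‖ ^ 2) ≤ fun _ => ε ^ 2 := fun t =>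
    pow_le_pow_left₀ (norm_nonneg _) (hg t) 2
  simpa [L2normSq] using integral_mono_of_nonneg (ae_of_all _ fun t => by positivity)
    (integrable_const (μ := haar) (ε ^ 2)) (ae_of_all _ hle)

lemma integrable_norm_sq_of_continuous {g : Torus → ℂ} (hg : Continuous g) :
    Integrable (fun t => ‖g t‖ ^ 2) haar :=
  (hg.norm.pow 2).integrable_of_hasCompactSupport (HasCompactSupport.of_compactSpace _)

lemma L2normSq_sub_le {f g h : Torus → ℂ} (hf : Continuous f) (hg : Continuous g)
    (hh : Continuous h) :
    L2normSq (fun t => f t - g t) ≤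
      2 * L2normSq (fun t => f t - h t) + 2 * L2normSq (fun t => h t - g t) := by
  have hfh := integrable_norm_sq_of_continuous (g := fun t => f t - h t) (hf.sub hh)
  have hhg := integrable_norm_sq_of_continuous (g := fun t => h t - g t) (hh.sub hg)
  unfold L2normSq
  rw [← integral_const_mul, ← integral_const_mul, ← integral_add (hfh.const_mul 2)
    (hhg.const_mul 2)]
  exact integral_mono_of_nonneg (ae_of_all _ fun t => by positivity)
    ((hfh.const_mul 2).add (hhg.const_mul 2)) (ae_of_all _ fun t => norm_sub_sq_le _ _ _)

theorem sqrt_L2normSq_sub_le_of_leastSquares {ι : Type*} [Fintype ι] (x : ι → Torus)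
    {τ : ι → ℝ} (hτ : ∀ k, 0 ≤ τ k) {A B : ℝ} (hA : 0 < A)
    (hτB : ∑ k, τ k ≤ B) {f s p : Torus → ℂ} (hf : Continuous f) (hs : Continuous s)
    (hp : Continuous p)
    (hMZ : A * L2normSq (fun t => s t - p t) ≤ ∑ k, ‖s (x k) - p (x k)‖ ^ 2 * τ k)
    (hmin : ∑ k, ‖f (x k) - p (x k)‖ ^ 2 * τ k ≤ ∑ k, ‖f (x k) - s (x k)‖ ^ 2 * τ k)
    {ε : ℝ} (hε : 0 ≤ ε) (hfs : ∀ t, ‖f t - s t‖ ≤ ε) :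
    Real.sqrt (L2normSq (fun t => f t - p t)) ≤ Real.sqrt (2 + 8 * B / A) * ε := by
  have hB : 0 ≤ B := (sum_nonneg fun k _ => hτ k).trans hτB
  have hfs_samples : ∑ k, ‖f (x k) - s (x k)‖ ^ 2 * τ k ≤ B * ε ^ 2 := by
    have := sum_norm_sq_mul_le x hτ (g := fun t => f t - s t) hfs
    nlinarith [sq_nonneg ε]
  have hsp_samples : ∑ k, ‖s (x k) - p (x k)‖ ^ 2 * τ k ≤ 4 * B * ε ^ 2 := by
    have := sum_norm_sub_sq_mul_le x hτ s p f
    simp only [norm_sub_rev (s _) (f _)] at this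
    linarith
  have hsp : L2normSq (fun t => s t - p t) ≤ 4 * B * ε ^ 2 / A := by
    rw [le_div_iff₀ hA, mul_comm]
    exact hMZ.trans hsp_samples
  have hfp : L2normSq (fun t => f t - p t) ≤ (2 + 8 * B / A) * ε ^ 2 := by
    have := L2normSq_sub_le hf hp hs
    have := L2normSq_le_of_norm_le hfs
    calc _ ≤ 2 * ε ^ 2 + 2 * (4 * B * ε ^ 2 / A) := by linarith
      _ = (2 + 8 * B / A) * ε ^ 2 := by ring
  calc Real.sqrt (L2normSq (fun t => f t - p t))
      ≤ Real.sqrt ((2 + 8 * B / A) * ε ^ 2) := Real.sqrt_le_sqrt hfp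
    _ = Real.sqrt (2 + 8 * B / A) * ε := by
        rw [Real.sqrt_mul (by positivity), Real.sqrt_sq hε]

theorem geometric_convergence_quasi_interpolants_general
    (L : ℕ → ℕ) (x : ∀ n, Fin (L n) → Torus) (τ : ∀ n, Fin (L n) → ℝ)
    (A B : ℝ) (hA : 0 < A) (hτ : ∀ n k, 0 < τ n k)
    (hMZ : ∀ n (p : Torus → ℂ), IsTrigPoly n p →
      A * L2normSq p ≤ ∑ k, ‖p (x n k)‖ ^ 2 * τ n k ∧
      ∑ k, ‖p (x n k)‖ ^ 2 * τ n k ≤ B * L2normSq p)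
    (f : Torus → ℂ) (hf : Continuous f)
    (c ρ : ℝ) (hc : 0 < c) (hρ : 0 < ρ)
    (hdecay : ∀ k : ℤ, ‖fourierCoeff f k‖ ≤ c * Real.exp (-ρ * |(k : ℝ)|))
    (p : ∀ n : ℕ, Torus → ℂ) (hp : ∀ n, IsTrigPoly n (p n))
    (hmin : ∀ n (q : Torus → ℂ), IsTrigPoly n q →
      ∑ k, ‖f (x n k) - p n (x n k)‖ ^ 2 * τ n k ≤
        ∑ k, ‖f (x n k) - q (x n k)‖ ^ 2 * τ n k) :
    ∃ C : ℝ, 0 < C ∧ ∀ n : ℕ, 1 ≤ n →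
      Real.sqrt (L2normSq (fun t => f t - p n t)) ≤ C * Real.exp (-ρ * n) := by
  set r := Real.exp (-ρ)
  have hr1 : r < 1 := Real.exp_lt_one_iff.2 (neg_neg_iff_pos.2 hρ)
  set D := ∑' m : ℤ, r ^ m.natAbs
  have hD : 0 < D := (summable_pow_natAbs (Real.exp_pos _).le hr1).tsum_pos
    (fun _ => by positivity) 0 (by simp)
  have htail := norm_sub_fourierPartialSum_le hf (Real.exp_pos _).le hr1
    (fun k => (exp_neg_mul_abs_intCast ρ k) ▸ hdecay k)
  have hτB (n : ℕ) : ∑ k, τ n k ≤ B := by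
    simpa [L2normSq] using (hMZ n _ (isTrigPoly_const n 1)).2
  have hB : 0 ≤ B := (sum_nonneg fun k _ => (hτ 0 k).le).trans (hτB 0)
  refine ⟨Real.sqrt (2 + 8 * B / A) * (c * D), by positivity, fun n _ => ?_⟩
  have hS := isTrigPoly_fourierPartialSum n f
  rw [mul_comm (-ρ), Real.exp_nat_mul, mul_assoc]
  exact sqrt_L2normSq_sub_le_of_leastSquares (x n) (fun k => (hτ n k).le) hA (hτB n) hf
    hS.continuous (hp n).continuous (hMZ n _ (hS.sub (hp n))).1 (hmin n _ hS) (by positivity)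
    (htail n)

/-- for an MZ family and a continuous `f` with exponentially decaying
Fourier coefficients `|f̂(k)| ≤ c e^{-ρ|k|}`, the least squares quasi-interpolants
`p_n` satisfy `‖f − p_n‖₂ ≤ C e^{-ρn}` for all `n ≥ 1`, for some constant `C > 0`. -/
theorem geometric_convergence_quasi_interpolants
    (L : ℕ → ℕ) (x : ∀ n, Fin (L n) → Torus) (τ : ∀ n, Fin (L n) → ℝ)
    (A B : ℝ) (hA : 0 < A) (hB : 0 < B) (hτ : ∀ n k, 0 < τ n k)
    (hMZ : ∀ n (p : Torus → ℂ), IsTrigPoly n p →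
      A * L2normSq p ≤ ∑ k, ‖p (x n k)‖ ^ 2 * τ n k ∧
      ∑ k, ‖p (x n k)‖ ^ 2 * τ n k ≤ B * L2normSq p)
    (f : Torus → ℂ) (hf : Continuous f)
    (c ρ : ℝ) (hc : 0 < c) (hρ : 0 < ρ)
    (hdecay : ∀ k : ℤ, ‖fourierCoeff f k‖ ≤ c * Real.exp (-ρ * |(k : ℝ)|))
    (p : ∀ n : ℕ, Torus → ℂ) (hp : ∀ n, IsTrigPoly n (p n))
    (hmin : ∀ n (q : Torus → ℂ), IsTrigPoly n q →
      ∑ k, ‖f (x n k) - p n (x n k)‖ ^ 2 * τ n k ≤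
        ∑ k, ‖f (x n k) - q (x n k)‖ ^ 2 * τ n k) :
    ∃ C : ℝ, 0 < C ∧ ∀ n : ℕ, 1 ≤ n →
      Real.sqrt (L2normSq (fun t => f t - p n t)) ≤ C * Real.exp (-ρ * n) :=
  geometric_convergence_quasi_interpolants_general L x τ A B hA hτ hMZ f hf c ρ hc hρ hdecay p hp
    hmin

end
end

section
/- Let 𝒳 = {x_{n,k}} with weights τ = {τ_{n,k}} be a Marcinkiewicz–Zygmund family on 𝕋 with constants A, B > 0. Then for each n there exist complex weights w_{n,1},…,w_{n,L_n} such that the quadrature rule I_n(f) = ∑_{k=1}^{L_n} f(x_{n,k}) w_{n,k} satisfies: (i) I_n(p) = ∫₀¹ p(x) dx for all p ∈ 𝒯_n, and (ii) |I_n(f)|² ≤ A^{-1} ∑_{k=1}^{L_n} |f(x_{n,k})|² τ_{n,k} ≤ (B/A) ‖f‖_∞² for every continuous function f on 𝕋. -/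
open MeasureTheory AddCircle

noncomputable section

open scoped InnerProductSpace ComplexConjugate

/-!
By the lower Marcinkiewicz–Zygmund inequality, the weighted sampling map
`S p = (p (x k) * √(τ k))ₖ` controls the mean value of a trigonometric polynomial `p` of
degree `n` with coefficients `c`: `‖c 0‖² = ‖∫ p‖² ≤ ‖p‖₂² ≤ A⁻¹ ‖S p‖²`. Hence `c ↦ c 0` factors
through `S` as a functional of norm at most `A^(-1/2)` on the range of `S`, and its Riesz
representer `v` there yields the weights `w k = conj (v k) * √(τ k)`. Exactness is the
representation identity, the first bound is Cauchy–Schwarz with `‖v‖² ≤ A⁻¹`, and the second is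
the upper MZ inequality for the constant `1`, which gives `∑ τ k ≤ B`.
-/

section Representer

variable {𝕜 E M : Type*} [RCLike 𝕜] [NormedAddCommGroup E] [InnerProductSpace 𝕜 E]
  [FiniteDimensional 𝕜 E] [AddCommGroup M] [Module 𝕜 M]

theorem exists_inner_eq_of_sq_norm_le (T : M →ₗ[𝕜] E) (g : M →ₗ[𝕜] 𝕜) {C : ℝ} (hC : 0 ≤ C)
    (hg : ∀ c, ‖g c‖ ^ 2 ≤ C * ‖T c‖ ^ 2) :
    ∃ v : E, (∀ c, ⟪v, T c⟫_𝕜 = g c) ∧ ‖v‖ ^ 2 ≤ C := by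
  have hg' (c : M) : ‖g c‖ ≤ √C * ‖T c‖ := by
    rw [← pow_le_pow_iff_left₀ (norm_nonneg _) (by positivity) two_ne_zero, mul_pow,
      Real.sq_sqrt hC]
    exact hg c
  have hker : LinearMap.ker T ≤ LinearMap.ker g := fun c hc => by
    simpa [LinearMap.mem_ker.1 hc] using hg' c
  let S := LinearMap.range T
  let φ : S →ₗ[𝕜] 𝕜 := (LinearMap.ker T).liftQ g hker ∘ₗ T.quotKerEquivRange.symm.toLinearMap
  have hφ (c : M) : φ ⟨T c, LinearMap.mem_range_self T c⟩ = g c := by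
    rw [LinearMap.comp_apply, LinearEquiv.coe_coe, LinearMap.quotKerEquivRange_symm_apply_image,
      Submodule.mkQ_apply, Submodule.liftQ_apply]
  have hφ_norm : ‖LinearMap.toContinuousLinearMap φ‖ ≤ √C := by
    refine ContinuousLinearMap.opNorm_le_bound _ (Real.sqrt_nonneg C) ?_
    rintro ⟨_, c, rfl⟩
    simpa [hφ] using hg' c
  set v := (InnerProductSpace.toDual 𝕜 S).symm (LinearMap.toContinuousLinearMap φ)
  refine ⟨v, fun c => ?_, ?_⟩
  · rw [← hφ c, ← LinearMap.coe_toContinuousLinearMap' φ, ← InnerProductSpace.toDual_symm_apply]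
    exact (Submodule.coe_inner S v ⟨T c, _⟩).symm
  · have hv : ‖(v : E)‖ ≤ √C := by
      rwa [Submodule.norm_coe, LinearIsometryEquiv.norm_map]
    calc ‖(v : E)‖ ^ 2 ≤ √C ^ 2 := pow_le_pow_left₀ (norm_nonneg _) hv 2
      _ = C := Real.sq_sqrt hC

end Representer

theorem sq_norm_integral_le_integral_sq_norm {Ω E : Type*} [MeasurableSpace Ω] {μ : Measure Ω}
    [IsProbabilityMeasure μ] [NormedAddCommGroup E] [NormedSpace ℝ E] {f : Ω → E}
    (hf : MemLp f 2 μ) : ‖∫ ω, f ω ∂μ‖ ^ 2 ≤ ∫ ω, ‖f ω‖ ^ 2 ∂μ := by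
  have hvar := ProbabilityTheory.variance_nonneg (fun ω => ‖f ω‖) μ
  rw [ProbabilityTheory.variance_eq_sub hf.norm, sub_nonneg] at hvar
  exact (pow_le_pow_left₀ (norm_nonneg _) (norm_integral_le_integral_norm f) 2).trans hvar

theorem integral_fourier_eq_ite {T : ℝ} [hT : Fact (0 < T)] (l : ℤ) :
    ∫ t, fourier l t ∂haarAddCircle (T := T) = if l = 0 then 1 else 0 := by
  split_ifs with hl
  · simp [hl]
  · exact integral_eq_zero_of_add_right_eq_neg (fourier_add_half_inv_index hl hT.out)

theorem sum_sq_norm_mul_le_sq_iSup_mul_sum {X E : Type*} [TopologicalSpace X] [CompactSpace X]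
    [NormedAddCommGroup E] {m : ℕ} (y : Fin m → X) {σ : Fin m → ℝ} (hσ : ∀ k, 0 ≤ σ k)
    {f : X → E} (hf : Continuous f) :
    ∑ k, ‖f (y k)‖ ^ 2 * σ k ≤ (⨆ t, ‖f t‖) ^ 2 * ∑ k, σ k := by
  have hbdd : BddAbove (Set.range fun t => ‖f t‖) := (isCompact_range hf.norm).bddAbove
  rw [Finset.mul_sum]
  exact Finset.sum_le_sum fun k _ => mul_le_mul_of_nonneg_right
    (pow_le_pow_left₀ (norm_nonneg _) (le_ciSup hbdd (y k)) 2) (hσ k)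

section Sampling

variable {X : Type*} {m : ℕ} (y : Fin m → X) (σ : Fin m → ℝ)

def weightedSamples : (X → ℂ) →ₗ[ℂ] EuclideanSpace ℂ (Fin m) where
  toFun f := WithLp.toLp 2 fun k => f (y k) * (√(σ k) : ℂ)
  map_add' f g := by ext k; simp [add_mul]
  map_smul' a f := by ext k; simp [mul_assoc]

theorem norm_weightedSamples_sq (hσ : ∀ k, 0 ≤ σ k) (f : X → ℂ) :
    ‖weightedSamples y σ f‖ ^ 2 = ∑ k, ‖f (y k)‖ ^ 2 * σ k := by
  rw [EuclideanSpace.norm_sq_eq]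
  refine Finset.sum_congr rfl fun k _ => ?_
  simp [weightedSamples, mul_pow, Real.sq_sqrt (hσ k)]

theorem inner_weightedSamples (v : EuclideanSpace ℂ (Fin m)) (f : X → ℂ) :
    ⟪v, weightedSamples y σ f⟫_ℂ = ∑ k, f (y k) * (conj (v k) * (√(σ k) : ℂ)) := by
  rw [PiLp.inner_apply]
  refine Finset.sum_congr rfl fun k _ => ?_
  simp [weightedSamples, RCLike.inner_apply]
  ring

end Sampling

def trigPoly (n : ℕ) : (ℤ → ℂ) →ₗ[ℂ] Torus → ℂ where
  toFun c t := ∑ l ∈ Finset.Icc (-(n : ℤ)) n, c l * fourier l t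
  map_add' c d := by ext t; simp [add_mul, Finset.sum_add_distrib]
  map_smul' a c := by ext t; simp [Finset.mul_sum, mul_assoc]

theorem trigPoly_apply (n : ℕ) (c : ℤ → ℂ) :
    trigPoly n c = fun t => ∑ l ∈ Finset.Icc (-(n : ℤ)) n, c l * fourier l t := rfl

theorem isTrigPoly_trigPoly (n : ℕ) (c : ℤ → ℂ) : IsTrigPoly n (trigPoly n c) := ⟨c, rfl⟩

theorem continuous_trigPoly (n : ℕ) (c : ℤ → ℂ) : Continuous (trigPoly n c) := by
  rw [trigPoly_apply]
  fun_prop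

theorem integral_trigPoly (n : ℕ) (c : ℤ → ℂ) : ∫ t, trigPoly n c t ∂haar = c 0 := by
  rw [trigPoly_apply, integral_finsetSum _ fun l _ =>
    (by fun_prop : Continuous fun t => c l * fourier l t).integrable_of_hasCompactSupport
      (.of_compactSpace _)]
  simp only [integral_const_mul, integral_fourier_eq_ite, mul_ite, mul_one, mul_zero,
    Finset.sum_ite_eq', Finset.mem_Icc]
  simp

theorem isTrigPoly_one_s8 (n : ℕ) : IsTrigPoly n fun _ => 1 := by
  refine ⟨Pi.single 0 1, funext fun t => ?_⟩
  simp [Pi.single_apply]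

theorem L2normSq_one_s8 : L2normSq (fun _ => 1) = 1 := by
  simp [L2normSq]

theorem sq_norm_integral_le_L2normSq {p : Torus → ℂ} (hp : Continuous p) :
    ‖∫ t, p t ∂haar‖ ^ 2 ≤ L2normSq p :=
  sq_norm_integral_le_integral_sq_norm (hp.memLp_of_hasCompactSupport (.of_compactSpace p))

theorem quadrature_weights_exist_general
    (L : ℕ → ℕ) (x : ∀ n, Fin (L n) → Torus) (τ : ∀ n, Fin (L n) → ℝ)
    (A B : ℝ) (hA : 0 < A) (hτ : ∀ n k, 0 < τ n k)
    (hMZ : ∀ n (p : Torus → ℂ), IsTrigPoly n p →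
      A * L2normSq p ≤ ∑ k, ‖p (x n k)‖ ^ 2 * τ n k ∧
      ∑ k, ‖p (x n k)‖ ^ 2 * τ n k ≤ B * L2normSq p) :
    ∀ n : ℕ, ∃ w : Fin (L n) → ℂ,
      (∀ p : Torus → ℂ, IsTrigPoly n p →
        ∑ k, p (x n k) * w k = ∫ t, p t ∂haar) ∧
      (∀ f : Torus → ℂ, Continuous f →
        ‖∑ k, f (x n k) * w k‖ ^ 2 ≤ A⁻¹ * ∑ k, ‖f (x n k)‖ ^ 2 * τ n k ∧
        A⁻¹ * ∑ k, ‖f (x n k)‖ ^ 2 * τ n k ≤ (B / A) * (⨆ t : Torus, ‖f t‖) ^ 2) := by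
  intro n
  have hτ₀ (k : Fin (L n)) : 0 ≤ τ n k := (hτ n k).le
  set S := weightedSamples (x n) (τ n)
  have hcoeff (c : ℤ → ℂ) : ‖c 0‖ ^ 2 ≤ A⁻¹ * ‖S (trigPoly n c)‖ ^ 2 := by
    rw [norm_weightedSamples_sq _ _ hτ₀, ← integral_trigPoly n c, le_inv_mul_iff₀ hA]
    exact (mul_le_mul_of_nonneg_left (sq_norm_integral_le_L2normSq (continuous_trigPoly n c))
      hA.le).trans (hMZ n _ (isTrigPoly_trigPoly n c)).1
  obtain ⟨v, hv_inner, hv_norm⟩ := exists_inner_eq_of_sq_norm_le (S ∘ₗ trigPoly n)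
    (LinearMap.proj 0) (inv_nonneg.2 hA.le) hcoeff
  have hsum_τ : ∑ k, τ n k ≤ B := by
    simpa [L2normSq_one_s8] using (hMZ n _ (isTrigPoly_one_s8 n)).2
  refine ⟨fun k => conj (v k) * √(τ n k), ?_, fun f hf => ⟨?_, ?_⟩⟩
  · rintro p ⟨c, rfl⟩
    rw [← trigPoly_apply n c, ← inner_weightedSamples, integral_trigPoly]
    exact hv_inner c
  · rw [← inner_weightedSamples, ← norm_weightedSamples_sq _ _ hτ₀]
    calc ‖⟪v, S f⟫_ℂ‖ ^ 2 ≤ (‖v‖ * ‖S f‖) ^ 2 :=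
          pow_le_pow_left₀ (norm_nonneg _) (norm_inner_le_norm v (S f)) 2
      _ ≤ A⁻¹ * ‖S f‖ ^ 2 := by rw [mul_pow]; gcongr
  · calc A⁻¹ * ∑ k, ‖f (x n k)‖ ^ 2 * τ n k ≤ A⁻¹ * ((⨆ t, ‖f t‖) ^ 2 * B) := by
          gcongr
          exact (sum_sq_norm_mul_le_sq_iSup_mul_sum _ hτ₀ hf).trans (by gcongr)
      _ = B / A * (⨆ t, ‖f t‖) ^ 2 := by ring

/-- every MZ family carries quadrature weights `w_{n,k}` such that
`I_n(f) = ∑_k f(x_{n,k}) w_{n,k}` is exact on `𝒯_n` and satisfies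
`|I_n(f)|² ≤ A⁻¹ ∑_k |f(x_{n,k})|² τ_{n,k} ≤ (B/A) ‖f‖_∞²` for continuous `f`. -/
theorem quadrature_weights_exist
    (L : ℕ → ℕ) (x : ∀ n, Fin (L n) → Torus) (τ : ∀ n, Fin (L n) → ℝ)
    (A B : ℝ) (hA : 0 < A) (hB : 0 < B) (hτ : ∀ n k, 0 < τ n k)
    (hMZ : ∀ n (p : Torus → ℂ), IsTrigPoly n p →
      A * L2normSq p ≤ ∑ k, ‖p (x n k)‖ ^ 2 * τ n k ∧
      ∑ k, ‖p (x n k)‖ ^ 2 * τ n k ≤ B * L2normSq p) :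
    ∀ n : ℕ, ∃ w : Fin (L n) → ℂ,
      (∀ p : Torus → ℂ, IsTrigPoly n p →
        ∑ k, p (x n k) * w k = ∫ t, p t ∂haar) ∧
      (∀ f : Torus → ℂ, Continuous f →
        ‖∑ k, f (x n k) * w k‖ ^ 2 ≤ A⁻¹ * ∑ k, ‖f (x n k)‖ ^ 2 * τ n k ∧
        A⁻¹ * ∑ k, ‖f (x n k)‖ ^ 2 * τ n k ≤ (B / A) * (⨆ t : Torus, ‖f t‖) ^ 2) :=
  quadrature_weights_exist_general L x τ A B hA hτ hMZ
end
end
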